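/- arXiv:2508.20017 — 3 statements merged into one kernel-verified Lean document; each statement's English description precedes it below -/
import Mathlib

section
/- Let α, β, ζ be probability measures on ℝ^d with finite first moment, let π¹ be a martingale coupling of (α, β) (i.e. a coupling whose disintegration kernels have barycenter equal to the first coordinate), and let π² be a coupling of (α, ζ). Then there exist random variables A, B, Z on a common probability space such that (A,B) has law π¹, (A,Z) has law π², and E[B | A, Z] = A almost surely. -/
open MeasureTheory ProbabilityTheory Filter Set
open scoped ENNReal RealInnerProductSpace

noncomputable section

abbrev Eu (d : ℕ) := EuclideanSpace ℝ (Fin d)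

/-- A coupling of two probability measures on `ℝ^d`. -/
def IsCoupling {d : ℕ} (r : Measure (Eu d × Eu d)) (p q : Measure (Eu d)) : Prop :=
  IsProbabilityMeasure r ∧ r.map Prod.fst = p ∧ r.map Prod.snd = q

/-- Finite first moment. -/
def HasFst {d : ℕ} (p : Measure (Eu d)) : Prop := Integrable (fun x => ‖x‖) p

/-! Glue the two couplings along `A`: draw `(A, Z) ∼ π²` and then `B ∼ κ¹(A, ·)` independently
of `Z` given `A`, i.e. take the law `π² ⊗ κ¹(a, ·)` on `(ℝ^d × ℝ^d) × ℝ^d`. Then `(A, B) ∼ α ⊗ κ¹ = π¹`,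
and since the conditional law of `B` given `(A, Z)` is `κ¹(A, ·)`, the martingale property gives
`E[B | A, Z] = ∫ b κ¹(A, db) = A`. -/

section CompProd

variable {X Y W : Type*} [MeasurableSpace X] [MeasurableSpace Y] [MeasurableSpace W]

lemma MeasureTheory.Measure.map_compProd_prodMkRight (μ : Measure (X × Y)) [SFinite μ]
    (κ : Kernel X W) [IsSFiniteKernel κ] :
    (μ ⊗ₘ κ.prodMkRight Y).map (fun ω => (ω.1.1, ω.2)) = μ.map Prod.fst ⊗ₘ κ := by
  have hm : Measurable fun ω : (X × Y) × W => (ω.1.1, ω.2) := by fun_prop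
  ext s hs
  rw [Measure.map_apply hm hs, Measure.compProd_apply (hm hs), Measure.compProd_apply hs,
    lintegral_map (Kernel.measurable_kernel_prodMk_left hs) measurable_fst]
  rfl

lemma ProbabilityTheory.condExp_snd_compProd_ae_eq {E : Type*} [NormedAddCommGroup E]
    [NormedSpace ℝ E] [CompleteSpace E] [MeasurableSpace E] [BorelSpace E]
    [SecondCountableTopology E] (μ : Measure X) [IsFiniteMeasure μ] (κ : Kernel X E)
    [IsMarkovKernel κ] (hint : Integrable Prod.snd (μ ⊗ₘ κ)) :
    (μ ⊗ₘ κ)[Prod.snd | MeasurableSpace.comap Prod.fst ‹_›] =ᵐ[μ ⊗ₘ κ]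
      fun p => ∫ e, e ∂κ p.1 := by
  have hκ : condDistrib Prod.snd Prod.fst (μ ⊗ₘ κ) =ᵐ[(μ ⊗ₘ κ).map Prod.fst] κ :=
    condDistrib_ae_eq_of_measure_eq_compProd_of_measurable measurable_fst measurable_snd
      (by rw [Measure.map_id', ← Measure.fst, Measure.fst_compProd])
  filter_upwards [condExp_ae_eq_integral_condDistrib' measurable_fst hint,
    ae_of_ae_map measurable_fst.aemeasurable hκ] with p hp hpκ
  rw [hp, hpκ]

end CompProd

theorem statement0_general {d : ℕ} (α β ζ : Measure (Eu d))
    (hβ : HasFst β)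
    (π1 π2 : Measure (Eu d × Eu d))
    (κ1 : Kernel (Eu d) (Eu d)) [IsMarkovKernel κ1]
    (hπ1 : π1 = α.compProd κ1)
    (hπ1c : IsCoupling π1 α β)
    (hmart : ∀ᵐ a ∂α, ∫ b, b ∂(κ1 a) = a)
    (hπ2c : IsCoupling π2 α ζ) :
    ∃ (Ω : Type) (mΩ : MeasurableSpace Ω) (P : Measure Ω) (_ : IsProbabilityMeasure P)
      (A B Z : Ω → Eu d), Measurable A ∧ Measurable B ∧ Measurable Z ∧
        P.map (fun ω => (A ω, B ω)) = π1 ∧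
        P.map (fun ω => (A ω, Z ω)) = π2 ∧
        P[B | MeasurableSpace.comap (fun ω => (A ω, Z ω)) inferInstance] =ᵐ[P] A := by
  obtain ⟨-, -, hβ_eq⟩ := hπ1c
  obtain ⟨hπ2, rfl, -⟩ := hπ2c
  subst hπ1 hβ_eq
  set P := π2 ⊗ₘ κ1.prodMkRight (Eu d)
  have hAB : P.map (fun ω => (ω.1.1, ω.2)) = π2.map Prod.fst ⊗ₘ κ1 :=
    Measure.map_compProd_prodMkRight π2 κ1
  have hB : P.map Prod.snd = (π2.map Prod.fst ⊗ₘ κ1).map Prod.snd := by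
    rw [← hAB, Measure.map_map measurable_snd (by fun_prop)]
    rfl
  have hBint : Integrable Prod.snd P := by
    refine (integrable_map_measure aestronglyMeasurable_id measurable_snd.aemeasurable).mp ?_
    rw [hB]
    exact (integrable_norm_iff aestronglyMeasurable_id).mp hβ
  have hA : P.map (fun ω => ω.1.1) = π2.map Prod.fst := by
    rw [← Measure.fst_compProd (π2.map Prod.fst) κ1, ← hAB, Measure.fst,
      Measure.map_map measurable_fst (by fun_prop)]
    rfl
  have hmartP : ∀ᵐ ω ∂P, ∫ b, b ∂κ1 ω.1.1 = ω.1.1 :=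
    ae_of_ae_map (by fun_prop) (hA ▸ hmart)
  refine ⟨_, inferInstance, P, inferInstance, fun ω => ω.1.1, Prod.snd, fun ω => ω.1.2,
    by fun_prop, measurable_snd, by fun_prop, hAB, Measure.fst_compProd _ _, ?_⟩
  filter_upwards [condExp_snd_compProd_ae_eq π2 _ hBint, hmartP] with ω hω hmartω
  exact hω.trans hmartω

/-- Given a martingale coupling `π¹ = α ⊗ κ1` of `(α, β)` (the disintegration kernel `κ1`
has barycenter equal to the first coordinate) and a coupling `π²` of `(α, ζ)`, there are
random variables `A, B, Z` on a common probability space with `(A,B) ∼ π¹`, `(A,Z) ∼ π²`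
and `E[B | A, Z] = A` almost surely. -/
theorem statement0 {d : ℕ} (α β ζ : Measure (Eu d))
    [IsProbabilityMeasure α] [IsProbabilityMeasure β] [IsProbabilityMeasure ζ]
    (hα : HasFst α) (hβ : HasFst β) (hζ : HasFst ζ)
    (π1 π2 : Measure (Eu d × Eu d))
    (κ1 : Kernel (Eu d) (Eu d)) [IsMarkovKernel κ1]
    (hπ1 : π1 = α.compProd κ1)
    (hπ1c : IsCoupling π1 α β)
    (hmart : ∀ᵐ a ∂α, ∫ b, b ∂(κ1 a) = a)
    (hπ2c : IsCoupling π2 α ζ) :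
    ∃ (Ω : Type) (mΩ : MeasurableSpace Ω) (P : Measure Ω) (_ : IsProbabilityMeasure P)
      (A B Z : Ω → Eu d), Measurable A ∧ Measurable B ∧ Measurable Z ∧
        P.map (fun ω => (A ω, B ω)) = π1 ∧
        P.map (fun ω => (A ω, Z ω)) = π2 ∧
        P[B | MeasurableSpace.comap (fun ω => (A ω, Z ω)) inferInstance] =ᵐ[P] A :=
  statement0_general α β ζ hβ π1 π2 κ1 hπ1 hπ1c hmart hπ2c
end
end

section
/- Let μ be a probability measure on ℝ^d concentrated on a Borel set I, let (Iⱼ)ⱼ be Borel sets with μ(I \ ⋃ⱼ Iⱼ) = 0 and μ(Iⱼ) > 0 for all j, let μⱼ := μ(Iⱼ ∩ ·)/μ(Iⱼ), and let (π_x)_x be a Markov kernel from ℝ^d to ℝ^d. Define ν := ∫ π_x μ(dx) and νⱼ := ∫ π_x μⱼ(dx). Let h, hₙ : ℝ^d → ℝ be Borel functions. Then hₙ → h in ν-measure if and only if hₙ → h in νⱼ-measure for every j. -/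
/-!
The measures `ν` and `νⱼ` give a set `A` the mass `∫ π_x(A) μ(dx)`, resp. `∫ π_x(A) μⱼ(dx)`,
so both convergences concern integrals of the functions `x ↦ π_x(|hₙ - h| ≥ ε)`, which are
bounded by `1`. The normalizing constants `μ(Iⱼ)⁻¹` are finite and nonzero, and restricting `μ`
only decreases these integrals, which gives one direction. Conversely, the integral over the
whole space is at most the sum of the integrals over `I₀, …, I_k` plus `μ` of the complement of
`I₀ ∪ ⋯ ∪ I_k`; the sum tends to `0` as `n → ∞` for each fixed `k`, and the remainder tends to
`0` as `k → ∞` because the `Iⱼ` cover `μ`-almost everything.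
-/

open MeasureTheory ProbabilityTheory Filter Set
open scoped ENNReal Topology

noncomputable section

theorem ENNReal.tendsto_nhds_zero_of_le_add {ι : Type*} {l : Filter ι} {a : ι → ℝ≥0∞}
    {b : ℕ → ι → ℝ≥0∞} {c : ℕ → ℝ≥0∞} (hb : ∀ k, Tendsto (b k) l (𝓝 0))
    (hc : Tendsto c atTop (𝓝 0)) (hle : ∀ k i, a i ≤ b k i + c k) :
    Tendsto a l (𝓝 0) := by
  rw [ENNReal.tendsto_nhds_zero]
  intro ε hε
  have hε2 : 0 < ε / 2 := ENNReal.half_pos hε.ne'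
  obtain ⟨k, hk⟩ := (hc.eventually_le_const hε2).exists
  filter_upwards [(hb k).eventually_le_const hε2] with i hi
  calc a i ≤ b k i + c k := hle k i
    _ ≤ ε / 2 + ε / 2 := add_le_add hi hk
    _ = ε := ENNReal.add_halves ε

namespace MeasureTheory

section Accumulate

variable {α : Type*} [MeasurableSpace α] {μ : Measure α}

theorem setLIntegral_accumulate_le (S : ℕ → Set α) (f : α → ℝ≥0∞) (k : ℕ) :
    ∫⁻ x in accumulate S k, f x ∂μ ≤ ∑ j ∈ Finset.range (k + 1), ∫⁻ x in S j, f x ∂μ := by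
  induction k with
  | zero => simp [accumulate_def]
  | succ k ih =>
    rw [accumulate_succ, Finset.sum_range_succ]
    exact (lintegral_union_le _ _ _).trans (add_le_add_left ih _)

theorem lintegral_le_sum_setLIntegral_add {f : α → ℝ≥0∞} {C : ℝ≥0∞} (hf : ∀ x, f x ≤ C)
    (S : ℕ → Set α) (k : ℕ) :
    ∫⁻ x, f x ∂μ ≤
      ∑ j ∈ Finset.range (k + 1), ∫⁻ x in S j, f x ∂μ + C * μ (accumulate S k)ᶜ := by
  calc ∫⁻ x, f x ∂μ = ∫⁻ x in accumulate S k ∪ (accumulate S k)ᶜ, f x ∂μ := by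
        rw [union_compl_self, Measure.restrict_univ]
    _ ≤ ∫⁻ x in accumulate S k, f x ∂μ + ∫⁻ x in (accumulate S k)ᶜ, f x ∂μ :=
        lintegral_union_le _ _ _
    _ ≤ ∑ j ∈ Finset.range (k + 1), ∫⁻ x in S j, f x ∂μ + C * μ (accumulate S k)ᶜ := by
        gcongr
        · exact setLIntegral_accumulate_le S f k
        · exact (lintegral_mono hf).trans_eq (setLIntegral_const _ C)

theorem tendsto_measure_compl_accumulate [IsFiniteMeasure μ] {S : ℕ → Set α}
    (hS : ∀ j, MeasurableSet (S j)) (hcover : μ (⋃ j, S j)ᶜ = 0) :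
    Tendsto (fun k => μ (accumulate S k)ᶜ) atTop (𝓝 0) := by
  have hmeas (k : ℕ) : MeasurableSet (accumulate S k) :=
    .biUnion (to_countable _) fun j _ => hS j
  have := tendsto_measure_iInter_atTop (μ := μ) (fun k => (hmeas k).compl.nullMeasurableSet)
    (fun _ _ hkl => compl_subset_compl.2 (monotone_accumulate hkl)) ⟨0, measure_ne_top μ _⟩
  rwa [← compl_iUnion, iUnion_accumulate, hcover] at this

theorem tendsto_lintegral_of_forall_setLIntegral [IsFiniteMeasure μ] {ι : Type*}
    {l : Filter ι} {f : ι → α → ℝ≥0∞} {C : ℝ≥0∞} (hC : C ≠ ∞) (hf : ∀ i x, f i x ≤ C)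
    {S : ℕ → Set α} (hS : ∀ j, MeasurableSet (S j)) (hcover : μ (⋃ j, S j)ᶜ = 0)
    (h : ∀ j, Tendsto (fun i => ∫⁻ x in S j, f i x ∂μ) l (𝓝 0)) :
    Tendsto (fun i => ∫⁻ x, f i x ∂μ) l (𝓝 0) := by
  refine ENNReal.tendsto_nhds_zero_of_le_add (fun k => ?_) ?_
    (fun k i => lintegral_le_sum_setLIntegral_add (hf i) S k)
  · simpa using tendsto_finsetSum (Finset.range (k + 1)) fun j _ => h j
  · simpa using ENNReal.Tendsto.const_mul (tendsto_measure_compl_accumulate hS hcover) (.inr hC)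

end Accumulate

section InMeasure

variable {α β E ι : Type*} [MeasurableSpace α] [MeasurableSpace β] {l : Filter ι}
  {f : ι → β → E} {g : β → E}

theorem TendstoInMeasure.mono_measure [EDist E] {ν ν' : Measure β} (hν : ν' ≤ ν)
    (h : TendstoInMeasure ν f l g) : TendstoInMeasure ν' f l g := fun ε hε =>
  tendsto_of_tendsto_of_tendsto_of_le_of_le tendsto_const_nhds (h ε hε) (fun _ => zero_le)
    fun _ => hν _

theorem TendstoInMeasure.smul_measure [EDist E] {ν : Measure β} {c : ℝ≥0∞} (hc : c ≠ ∞)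
    (h : TendstoInMeasure ν f l g) : TendstoInMeasure (c • ν) f l g := fun ε hε => by
  simpa using ENNReal.Tendsto.const_mul (h ε hε) (.inr hc)

theorem tendstoInMeasure_smul_iff [EDist E] {ν : Measure β} {c : ℝ≥0∞} (h0 : c ≠ 0)
    (htop : c ≠ ∞) : TendstoInMeasure (c • ν) f l g ↔ TendstoInMeasure ν f l g := by
  refine ⟨fun h => ?_, fun h => ?_⟩
  · simpa [smul_smul, ENNReal.inv_mul_cancel h0 htop] using
      h.smul_measure (ENNReal.inv_ne_top.2 h0)
  · exact h.smul_measure htop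

theorem Measure.bind_restrict_le (μ : Measure α) (κ : Kernel α β) (S : Set α) :
    (μ.restrict S).bind κ ≤ μ.bind κ :=
  Measure.le_iff.2 fun s hs => by
    simpa only [Measure.bind_apply hs κ.aemeasurable] using setLIntegral_le_lintegral S _

theorem tendstoInMeasure_bind_of_forall_restrict [PseudoEMetricSpace E] [MeasurableSpace E]
    [OpensMeasurableSpace E] [SecondCountableTopology E] {μ : Measure α} [IsFiniteMeasure μ]
    {κ : Kernel α β} [IsFiniteKernel κ]
    {S : ℕ → Set α} (hS : ∀ j, MeasurableSet (S j)) (hcover : μ (⋃ j, S j)ᶜ = 0)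
    (hf : ∀ i, Measurable (f i)) (hg : Measurable g)
    (h : ∀ j, TendstoInMeasure ((μ.restrict (S j)).bind κ) f l g) :
    TendstoInMeasure (μ.bind κ) f l g := by
  intro ε hε
  have hA (i : ι) : MeasurableSet {x | ε ≤ edist (f i x) (g x)} :=
    measurableSet_le measurable_const ((hf i).edist hg)
  have hj (j : ℕ) := h j ε hε
  simp only [Measure.bind_apply (hA _) κ.aemeasurable] at hj ⊢
  exact tendsto_lintegral_of_forall_setLIntegral κ.bound_ne_top
    (fun i x => κ.measure_le_bound x _) hS hcover hj

end InMeasure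

end MeasureTheory

theorem statement5_general {d : ℕ} (μ : Measure (Eu d)) [IsProbabilityMeasure μ]
    (I : Set (Eu d)) (hμI : μ Iᶜ = 0)
    (Is : ℕ → Set (Eu d)) (hIs : ∀ j, MeasurableSet (Is j))
    (hcover : μ (I \ ⋃ j, Is j) = 0) (hpos : ∀ j, 0 < μ (Is j))
    (κ : Kernel (Eu d) (Eu d)) [IsMarkovKernel κ]
    (h : Eu d → ℝ) (hn : ℕ → Eu d → ℝ)
    (hh : Measurable h) (hhn : ∀ n, Measurable (hn n)) :
    TendstoInMeasure (μ.bind fun x => κ x) hn atTop h ↔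
      ∀ j, TendstoInMeasure
        (((μ (Is j))⁻¹ • μ.restrict (Is j)).bind fun x => κ x) hn atTop h := by
  have hcompl_null : μ (⋃ j, Is j)ᶜ = 0 :=
    measure_mono_null (fun x hx => by by_cases hxI : x ∈ I <;> simp_all)
      (measure_union_null hμI hcover)
  have hnormalize (j : ℕ) :
      TendstoInMeasure (((μ (Is j))⁻¹ • μ.restrict (Is j)).bind κ) hn atTop h ↔
        TendstoInMeasure ((μ.restrict (Is j)).bind κ) hn atTop h := by
    rw [Measure.bind_smul, tendstoInMeasure_smul_iff (ENNReal.inv_ne_zero.2 (measure_ne_top μ _))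
      (ENNReal.inv_ne_top.2 (hpos j).ne')]
  exact ⟨fun H j => (hnormalize j).2 (H.mono_measure (μ.bind_restrict_le κ (Is j))),
    fun H => tendstoInMeasure_bind_of_forall_restrict hIs hcompl_null hhn hh
      fun j => (hnormalize j).1 (H j)⟩

/-- With `μ` concentrated on `I`, covered (mod `μ`) by sets `Iⱼ` of positive measure,
`μⱼ` the normalized restrictions, a Markov kernel `(π_x)_x`, `ν = ∫ π_x μ(dx)` and
`νⱼ = ∫ π_x μⱼ(dx)`: convergence in `ν`-measure is equivalent to convergence in
`νⱼ`-measure for every `j`. -/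
theorem statement5 {d : ℕ} (μ : Measure (Eu d)) [IsProbabilityMeasure μ]
    (I : Set (Eu d)) (hI : MeasurableSet I) (hμI : μ Iᶜ = 0)
    (Is : ℕ → Set (Eu d)) (hIs : ∀ j, MeasurableSet (Is j))
    (hcover : μ (I \ ⋃ j, Is j) = 0) (hpos : ∀ j, 0 < μ (Is j))
    (κ : Kernel (Eu d) (Eu d)) [IsMarkovKernel κ]
    (h : Eu d → ℝ) (hn : ℕ → Eu d → ℝ)
    (hh : Measurable h) (hhn : ∀ n, Measurable (hn n)) :
    TendstoInMeasure (μ.bind fun x => κ x) hn atTop h ↔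
      ∀ j, TendstoInMeasure
        (((μ (Is j))⁻¹ • μ.restrict (Is j)).bind fun x => κ x) hn atTop h :=
  statement5_general μ I hμI Is hIs hcover hpos κ h hn hh hhn
end
end

section
/- Let μ ≤_c ν be probability measures on ℝ^d with finite second moments, π^{SBM} the stretched Brownian motion between μ and ν with disintegration (π_x^{SBM})_x, and B ⊆ ℝ^d Borel with μ(B) > 0. Define μ^B := μ(B ∩ ·)/μ(B), ν^B := ∫ π_x^{SBM} μ^B(dx), and π^B(dx,dy) := μ^B(dx) π_x^{SBM}(dy). Then π^B is the stretched Brownian motion between μ^B and ν^B. -/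
open MeasureTheory ProbabilityTheory Filter Set
open scoped ENNReal RealInnerProductSpace Topology

noncomputable section

/-- The maximal covariance `MCov(p,q) = sup_{r ∈ Cpl(p,q)} ∫ ⟨x,y⟩ dr`. -/
def MCov {d : ℕ} (p q : Measure (Eu d)) : ℝ :=
  sSup {c | ∃ r : Measure (Eu d × Eu d), IsCoupling r p q ∧ c = ∫ z, (inner ℝ z.1 z.2 : ℝ) ∂r}

/-- The squared 2-Wasserstein distance `W₂²(p,q) = inf_{r ∈ Cpl(p,q)} ∫ ‖x-y‖² dr`. -/
def W2sq {d : ℕ} (p q : Measure (Eu d)) : ℝ :=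
  sInf {c | ∃ r : Measure (Eu d × Eu d), IsCoupling r p q ∧ c = ∫ z, ‖z.1 - z.2‖ ^ 2 ∂r}

/-- The barycenter of a measure. -/
def bary {d : ℕ} (p : Measure (Eu d)) : Eu d := ∫ x, x ∂p

/-- Finite second moment. -/
def HasSnd {d : ℕ} (p : Measure (Eu d)) : Prop := Integrable (fun x => ‖x‖ ^ 2) p

/-- Convex order of probability measures. -/
def ConvexOrder {d : ℕ} (p q : Measure (Eu d)) : Prop :=
  ∀ f : Eu d → ℝ, ConvexOn ℝ Set.univ f → Integrable f p → Integrable f q →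
    ∫ x, f x ∂p ≤ ∫ x, f x ∂q

/-- The standard Gaussian measure on `ℝ^d`. -/
def stdGaussian (d : ℕ) : Measure (Eu d) :=
  (Measure.pi fun _ : Fin d => ProbabilityTheory.gaussianReal 0 1).map
    (MeasurableEquiv.toLp 2 (Fin d → ℝ))

/-- `p ∈ P₂^x(ℝ^d)`: probability measure with finite second moment and barycenter `x`. -/
def MemP2x {d : ℕ} (p : Measure (Eu d)) (x : Eu d) : Prop :=
  IsProbabilityMeasure p ∧ HasSnd p ∧ bary p = x

/-! Gluing a competitor on `B` with the optimiser off `B` gives a competitor for the full problem,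
so an optimiser is still optimal on `B`; the cancellation of the common contribution of `Bᶜ`
needs the value of the full problem to be finite, which follows from
`MCov(p, q) ≤ ∫ ‖x‖² dp + ∫ ‖y‖² dq` and the finite second moments of `ν` and of the Gaussian. -/

namespace ProbabilityTheory.Kernel

variable {α β : Type*} {mα : MeasurableSpace α} {mβ : MeasurableSpace β}
  {μ : Measure α} {κ η : Kernel α β} {s : Set α} [DecidablePred (· ∈ s)]

lemma piecewise_comp_eq (hs : MeasurableSet s)
    (h : κ ∘ₘ μ.restrict s = η ∘ₘ μ.restrict s) : piecewise hs κ η ∘ₘ μ = η ∘ₘ μ := by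
  have h_on : ∀ᵐ a ∂μ.restrict s, piecewise hs κ η a = κ a :=
    (ae_restrict_mem hs).mono fun a ha => by rw [piecewise_apply, if_pos ha]
  have h_off : ∀ᵐ a ∂μ.restrict sᶜ, piecewise hs κ η a = η a :=
    (ae_restrict_mem hs.compl).mono fun a ha => by rw [piecewise_apply, if_neg ha]
  rw [← Measure.restrict_add_restrict_compl (μ := μ) hs, Measure.comp_add, Measure.comp_add,
    Measure.comp_congr h_on, Measure.comp_congr h_off, h]

lemma ae_piecewise (hs : MeasurableSet s) {P : Measure β → α → Prop}
    (hκ : ∀ᵐ a ∂μ.restrict s, P (κ a) a) (hη : ∀ᵐ a ∂μ.restrict sᶜ, P (η a) a) :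
    ∀ᵐ a ∂μ, P (piecewise hs κ η a) a := by
  rw [← Measure.restrict_add_restrict_compl (μ := μ) hs, ae_add_measure_iff]
  constructor
  · filter_upwards [hκ, ae_restrict_mem hs] with a ha has
    rwa [piecewise_apply, if_pos has]
  · filter_upwards [hη, ae_restrict_mem hs.compl] with a ha has
    rwa [piecewise_apply, if_neg has]

lemma lintegral_comp_piecewise (hs : MeasurableSet s) (Φ : Measure β → ℝ≥0∞) :
    ∫⁻ a, Φ (piecewise hs κ η a) ∂μ = ∫⁻ a in s, Φ (κ a) ∂μ + ∫⁻ a in sᶜ, Φ (η a) ∂μ := by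
  rw [← lintegral_add_compl _ hs]
  congr 1
  · exact setLIntegral_congr_fun hs fun a ha => by rw [piecewise_apply, if_pos ha]
  · exact setLIntegral_congr_fun hs.compl fun a ha => by rw [piecewise_apply, if_neg ha]

end ProbabilityTheory.Kernel

section Optimality

variable {α β : Type*} {mα : MeasurableSpace α} {mβ : MeasurableSpace β}

/-- With `Φ = MCov(·, γ)` and `P = MemP2x`, an optimal kernel is the stretched Brownian motion
from `μ` to `κ ∘ₘ μ`. -/
def IsOptimalKernel (μ : Measure α) (Φ : Measure β → ℝ≥0∞) (P : Measure β → α → Prop)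
    (κ : Kernel α β) : Prop :=
  ∀ η : Kernel α β, IsMarkovKernel η → η ∘ₘ μ = κ ∘ₘ μ → (∀ᵐ a ∂μ, P (η a) a) →
    ∫⁻ a, Φ (η a) ∂μ ≤ ∫⁻ a, Φ (κ a) ∂μ

variable {μ : Measure α} {Φ : Measure β → ℝ≥0∞} {P : Measure β → α → Prop} {κ : Kernel α β}

lemma IsOptimalKernel.restrict [IsMarkovKernel κ] (hκ : IsOptimalKernel μ Φ P κ)
    (hP : ∀ᵐ a ∂μ, P (κ a) a) (hfin : ∫⁻ a, Φ (κ a) ∂μ ≠ ∞) {s : Set α} (hs : MeasurableSet s) :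
    IsOptimalKernel (μ.restrict s) Φ P κ := by
  classical
  intro η _ hcomp hPη
  have hglued := hκ (Kernel.piecewise hs η κ) inferInstance (Kernel.piecewise_comp_eq hs hcomp)
    (Kernel.ae_piecewise hs hPη (ae_restrict_of_ae hP))
  rw [Kernel.lintegral_comp_piecewise hs,
    ← lintegral_add_compl (μ := μ) (fun a => Φ (κ a)) hs] at hglued
  exact (ENNReal.add_le_add_iff_right
    (ne_top_of_le_ne_top hfin (setLIntegral_le_lintegral _ _))).1 hglued

lemma IsOptimalKernel.smul (hκ : IsOptimalKernel μ Φ P κ) {c : ℝ≥0∞} (hc₀ : c ≠ 0)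
    (hc : c ≠ ∞) : IsOptimalKernel (c • μ) Φ P κ := by
  intro η hη hcomp hPη
  have hcomp' : η ∘ₘ μ = κ ∘ₘ μ := by
    ext t ht
    have := congrArg (fun ρ : Measure β => ρ t) hcomp
    simp only [Measure.comp_smul, Measure.smul_apply, smul_eq_mul] at this
    exact (ENNReal.mul_right_inj hc₀ hc).1 this
  simp only [lintegral_smul_measure, smul_eq_mul]
  exact mul_le_mul_right (hκ η hη hcomp' ((Measure.ae_ennreal_smul_measure_iff hc₀).1 hPη)) c

end Optimality

lemma hasSnd_stdGaussian (d : ℕ) : HasSnd (stdGaussian d) := by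
  have h : stdGaussian d = ProbabilityTheory.stdGaussian (Eu d) := map_pi_eq_stdGaussian
  rw [HasSnd, h]
  exact IsGaussian.memLp_two_id.integrable_norm_pow two_ne_zero

lemma ofReal_mCov_le {d : ℕ} (p q : Measure (Eu d)) :
    ENNReal.ofReal (MCov p q) ≤
      ∫⁻ x, ENNReal.ofReal (‖x‖ ^ 2) ∂p + ∫⁻ y, ENNReal.ofReal (‖y‖ ^ 2) ∂q := by
  rcases eq_or_ne (∫⁻ x, ENNReal.ofReal (‖x‖ ^ 2) ∂p + ∫⁻ y, ENNReal.ofReal (‖y‖ ^ 2) ∂q) ∞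
    with hb | hb
  · rw [hb]; exact le_top
  have hpt : ∀ z : Eu d × Eu d, ‖(inner ℝ z.1 z.2 : ℝ)‖ₑ ≤
      ENNReal.ofReal (‖z.1‖ ^ 2) + ENNReal.ofReal (‖z.2‖ ^ 2) := fun z => by
    rw [Real.enorm_eq_ofReal_abs, ← ENNReal.ofReal_add (by positivity) (by positivity)]
    refine ENNReal.ofReal_le_ofReal ((abs_real_inner_le_norm z.1 z.2).trans ?_)
    nlinarith [sq_nonneg (‖z.1‖ - ‖z.2‖), norm_nonneg z.1, norm_nonneg z.2]
  have hsq : Measurable fun x : Eu d => ENNReal.ofReal (‖x‖ ^ 2) := by fun_prop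
  refine ENNReal.ofReal_le_of_le_toReal (Real.sSup_le ?_ ENNReal.toReal_nonneg)
  rintro c ⟨r, ⟨-, rfl, rfl⟩, rfl⟩
  rw [← ENNReal.ofReal_le_iff_le_toReal hb]
  calc ENNReal.ofReal (∫ z, (inner ℝ z.1 z.2 : ℝ) ∂r)
      ≤ ‖∫ z, (inner ℝ z.1 z.2 : ℝ) ∂r‖ₑ := by
        rw [Real.enorm_eq_ofReal_abs]; exact ENNReal.ofReal_le_ofReal (le_abs_self _)
    _ ≤ ∫⁻ z, ‖(inner ℝ z.1 z.2 : ℝ)‖ₑ ∂r := enorm_integral_le_lintegral_enorm _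
    _ ≤ ∫⁻ z, (ENNReal.ofReal (‖z.1‖ ^ 2) + ENNReal.ofReal (‖z.2‖ ^ 2)) ∂r := lintegral_mono hpt
    _ = ∫⁻ x, ENNReal.ofReal (‖x‖ ^ 2) ∂r.map Prod.fst +
          ∫⁻ y, ENNReal.ofReal (‖y‖ ^ 2) ∂r.map Prod.snd := by
        rw [lintegral_map hsq measurable_fst, lintegral_map hsq measurable_snd]
        exact lintegral_add_left (hsq.comp measurable_fst) _

lemma lintegral_ofReal_mCov_ne_top {d : ℕ} {μ : Measure (Eu d)} [IsFiniteMeasure μ]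
    {κ : Kernel (Eu d) (Eu d)} {q : Measure (Eu d)} (hν : HasSnd (κ ∘ₘ μ)) (hq : HasSnd q) :
    ∫⁻ x, ENNReal.ofReal (MCov (κ x) q) ∂μ ≠ ∞ := by
  have hsq : Measurable fun y : Eu d => ENNReal.ofReal (‖y‖ ^ 2) := by fun_prop
  refine ne_top_of_le_ne_top ?_ (lintegral_mono fun x => ofReal_mCov_le (κ x) q)
  rw [lintegral_add_right _ measurable_const, lintegral_const,
    ← Measure.lintegral_bind κ.aemeasurable hsq.aemeasurable]
  exact ENNReal.add_ne_top.2 ⟨hν.lintegral_lt_top.ne,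
    ENNReal.mul_ne_top hq.lintegral_lt_top.ne (measure_ne_top μ _)⟩

theorem statement16_general {d : ℕ} (μ ν : Measure (Eu d))
    [IsProbabilityMeasure μ]
    (h2ν : HasSnd ν)
    (κ : Kernel (Eu d) (Eu d)) [IsMarkovKernel κ]
    (hmarg : μ.bind (fun x => κ x) = ν)
    (hker : ∀ᵐ x ∂μ, MemP2x (κ x) x)
    (hopt : ∀ (κ' : Kernel (Eu d) (Eu d)), IsMarkovKernel κ' →
      μ.bind (fun x => κ' x) = ν → (∀ᵐ x ∂μ, MemP2x (κ' x) x) →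
      ∫⁻ x, ENNReal.ofReal (MCov (κ' x) (stdGaussian d)) ∂μ ≤
        ∫⁻ x, ENNReal.ofReal (MCov (κ x) (stdGaussian d)) ∂μ)
    (B : Set (Eu d)) (hB : MeasurableSet B) (hBpos : 0 < μ B)
    (μB : Measure (Eu d)) (hμB : μB = (μ B)⁻¹ • μ.restrict B)
    (νB : Measure (Eu d)) (hνB : νB = μB.bind (fun x => κ x)) :
    (∀ᵐ x ∂μB, MemP2x (κ x) x) ∧ μB.bind (fun x => κ x) = νB ∧
    (∀ (κ' : Kernel (Eu d) (Eu d)), IsMarkovKernel κ' →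
      μB.bind (fun x => κ' x) = νB → (∀ᵐ x ∂μB, MemP2x (κ' x) x) →
      ∫⁻ x, ENNReal.ofReal (MCov (κ' x) (stdGaussian d)) ∂μB ≤
        ∫⁻ x, ENNReal.ofReal (MCov (κ x) (stdGaussian d)) ∂μB) := by
  subst hmarg hνB
  have hμB_ne_top : μ B ≠ ∞ := measure_ne_top μ B
  refine ⟨?_, rfl, ?_⟩
  · rw [hμB, Measure.ae_ennreal_smul_measure_iff (ENNReal.inv_ne_zero.2 hμB_ne_top)]
    exact ae_restrict_of_ae hker
  · have hκ : IsOptimalKernel μ (fun p => ENNReal.ofReal (MCov p (stdGaussian d)))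
        (fun p x => MemP2x p x) κ := hopt
    have hfin := lintegral_ofReal_mCov_ne_top (κ := κ) h2ν (hasSnd_stdGaussian d)
    rw [hμB]
    exact (hκ.restrict hker hfin hB).smul (ENNReal.inv_ne_zero.2 hμB_ne_top)
      (ENNReal.inv_ne_top.2 hBpos.ne')

/-- Localisation of the stretched Brownian motion: if `κ` is the SBM kernel between `μ`
and `ν` (the maximiser of `∫ MCov(π_x, γ) μ(dx)` over martingale couplings), `B` is Borel
with `μ(B) > 0`, `μ^B` the normalized restriction and `ν^B = ∫ π_x^{SBM} μ^B(dx)`, then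
`π^B = μ^B ⊗ κ` is the stretched Brownian motion between `μ^B` and `ν^B`. -/
theorem statement16 {d : ℕ} (μ ν : Measure (Eu d))
    [IsProbabilityMeasure μ] [IsProbabilityMeasure ν]
    (h2μ : HasSnd μ) (h2ν : HasSnd ν) (hc : ConvexOrder μ ν)
    (κ : Kernel (Eu d) (Eu d)) [IsMarkovKernel κ]
    (hmarg : μ.bind (fun x => κ x) = ν)
    (hker : ∀ᵐ x ∂μ, MemP2x (κ x) x)
    (hopt : ∀ (κ' : Kernel (Eu d) (Eu d)), IsMarkovKernel κ' →
      μ.bind (fun x => κ' x) = ν → (∀ᵐ x ∂μ, MemP2x (κ' x) x) →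
      ∫⁻ x, ENNReal.ofReal (MCov (κ' x) (stdGaussian d)) ∂μ ≤
        ∫⁻ x, ENNReal.ofReal (MCov (κ x) (stdGaussian d)) ∂μ)
    (B : Set (Eu d)) (hB : MeasurableSet B) (hBpos : 0 < μ B)
    (μB : Measure (Eu d)) (hμB : μB = (μ B)⁻¹ • μ.restrict B)
    (νB : Measure (Eu d)) (hνB : νB = μB.bind (fun x => κ x)) :
    (∀ᵐ x ∂μB, MemP2x (κ x) x) ∧ μB.bind (fun x => κ x) = νB ∧
    (∀ (κ' : Kernel (Eu d) (Eu d)), IsMarkovKernel κ' →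
      μB.bind (fun x => κ' x) = νB → (∀ᵐ x ∂μB, MemP2x (κ' x) x) →
      ∫⁻ x, ENNReal.ofReal (MCov (κ' x) (stdGaussian d)) ∂μB ≤
        ∫⁻ x, ENNReal.ofReal (MCov (κ x) (stdGaussian d)) ∂μB) :=
  statement16_general μ ν h2ν κ hmarg hker hopt B hB hBpos μB hμB νB hνB
end
end
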